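/- Let S be a nonempty subset of (Fin n → Bool) that is closed under pointwise Boolean AND and pointwise Boolean OR, and let l, u ∈ S satisfy l ≤ x ≤ u for all x ∈ S (the least and greatest elements of S in the pointwise order). Then for every positive integer k, the maximum of Σ_{1 ≤ i < j ≤ k} hammingDist(x_i, x_j) over all tuples (x₁, …, x_k) ∈ S^k equals ⌊k/2⌋·⌈k/2⌉·hammingDist(l, u); i.e., every tuple has pairwise-distance sum at most this value, and the tuple consisting of ⌊k/2⌋ copies of l and ⌈k/2⌉ copies of u attains it. -/

import Mathlib

/-!
Summing Hamming distances coordinatewise, coordinate `i` contributes the number of pairs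
`p < q` with `z p i ≠ z q i`, which is `a * b` where `a` and `b` count the tuple entries
with `i`-th bit `true` and `false`. Since `a + b = k`, this is at most `⌊k/2⌋ * ⌈k/2⌉`; and it
vanishes when `l i = u i`, because every element of `S` lies between `l` and `u`. The tuple of
`⌊k/2⌋` copies of `l` followed by `⌈k/2⌉` copies of `u` makes every coordinate with
`l i ≠ u i` contribute exactly `⌊k/2⌋ * ⌈k/2⌉`.
-/

open Finset

section PairSums

variable {ι : Type*} [Fintype ι] [LinearOrder ι]

theorem sum_sum_ite_lt_add_swap {M : Type*} [AddCommMonoid M] (g : ι → ι → M)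
    (hg : ∀ p, g p p = 0) :
    ∑ p, ∑ q, (if p < q then g p q + g q p else 0) = ∑ p, ∑ q, g p q := by
  have hsplit : ∀ p q, g p q = (if p < q then g p q else 0) + (if q < p then g p q else 0) := by
    intro p q
    rcases lt_trichotomy p q with h | rfl | h
    · simp [h, h.not_gt]
    · simp [hg]
    · simp [h, h.not_gt]
  simp_rw [ite_add_zero, sum_add_distrib]
  rw [sum_congr rfl fun p _ => sum_congr rfl fun q _ => hsplit p q]
  simp_rw [sum_add_distrib]
  rw [sum_comm (f := fun p q => if q < p then g p q else 0)]

theorem sum_sum_ite_lt_boole_ne (f : ι → Bool) :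
    ∑ p, ∑ q, (if p < q then (if f p ≠ f q then 1 else 0) else 0) =
      #{p | f p = true} * #{p | f p = false} := by
  have hne : ∀ p q, (if f p ≠ f q then 1 else 0) =
      (if f p = true then 1 else 0) * (if f q = false then 1 else 0) +
        (if f q = true then 1 else 0) * (if f p = false then 1 else 0) := by
    intro p q
    cases f p <;> cases f q <;> decide
  simp_rw [hne]
  rw [sum_sum_ite_lt_add_swap _ (fun p => by cases f p <;> simp), ← Fintype.sum_mul_sum, sum_boole, sum_boole, Nat.cast_id, Nat.cast_id]

end PairSums

theorem mul_le_add_div_two_mul_add_one_div_two (a b : ℕ) :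
    a * b ≤ (a + b) / 2 * ((a + b + 1) / 2) := by
  rcases Nat.even_or_odd' (a + b) with ⟨m, hm | hm⟩ <;> rw [hm]
  · rw [show 2 * m / 2 = m by omega, show (2 * m + 1) / 2 = m by omega]
    nlinarith [sq_nonneg ((a : ℤ) - b)]
  · rw [show (2 * m + 1) / 2 = m by omega, show (2 * m + 1 + 1) / 2 = m + 1 by omega]
    rcases le_or_gt a m with h | h <;> nlinarith

section Hamming

variable {ι κ : Type*} [Fintype ι] [Fintype κ]

theorem card_filter_eq_true_add_card_filter_eq_false (f : ι → Bool) :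
    #{p | f p = true} + #{p | f p = false} = Fintype.card ι := by
  simpa using card_filter_add_card_filter_not (s := univ) (fun p => f p = true)

variable [LinearOrder ι]

theorem sum_sum_ite_lt_hammingDist (z : ι → κ → Bool) :
    ∑ p, ∑ q, (if p < q then hammingDist (z p) (z q) else 0) =
      ∑ i, #{p | z p i = true} * #{p | z p i = false} := by
  have hcoord : ∀ p q, (if p < q then hammingDist (z p) (z q) else 0) =
      ∑ i, if p < q then (if z p i ≠ z q i then 1 else 0) else 0 := by
    intro p q
    split_ifs <;> simp [hammingDist, card_filter]
  simp_rw [hcoord, ← sum_sum_ite_lt_boole_ne]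
  rw [sum_congr rfl fun p _ => sum_comm, sum_comm]

theorem sum_sum_ite_lt_hammingDist_le {l u : κ → Bool} (z : ι → κ → Bool)
    (hz : ∀ p, l ≤ z p ∧ z p ≤ u) :
    ∑ p, ∑ q, (if p < q then hammingDist (z p) (z q) else 0) ≤
      Fintype.card ι / 2 * ((Fintype.card ι + 1) / 2) * hammingDist l u := by
  rw [sum_sum_ite_lt_hammingDist, hammingDist, card_filter, mul_sum]
  refine sum_le_sum fun i _ => ?_
  by_cases h : l i = u i
  · have hconst : ∀ p, z p i = l i := fun p => le_antisymm (h ▸ (hz p).2 i) ((hz p).1 i)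
    simp_rw [hconst]
    cases l i <;> simp
  · rw [if_pos h, mul_one, ← card_filter_eq_true_add_card_filter_eq_false (fun p => z p i)]
    exact mul_le_add_div_two_mul_add_one_div_two _ _

theorem sum_sum_ite_lt_hammingDist_ite {β : Type*} [DecidableEq β] (P : ι → Prop)
    [DecidablePred P] (x y : κ → β) :
    ∑ p, ∑ q, (if p < q then hammingDist (if P p then x else y) (if P q then x else y) else 0) =
      #{p | P p} * #{p | ¬ P p} * hammingDist x y := by
  have hdist : ∀ p q, hammingDist (if P p then x else y) (if P q then x else y) =
      (if decide (P p) ≠ decide (P q) then 1 else 0) * hammingDist x y := by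
    intro p q
    by_cases hp : P p <;> by_cases hq : P q <;> simp [hp, hq, hammingDist_comm]
  simp_rw [hdist, ← ite_zero_mul, ← sum_mul, sum_sum_ite_lt_boole_ne]
  simp

end Hamming

theorem max_sum_pairwise_hammingDist_double_horn_general
    (n k : ℕ) (S : Set (Fin n → Bool))
    (l u : Fin n → Bool)
    (hbound : ∀ x ∈ S, l ≤ x ∧ x ≤ u) :
    (∀ z : Fin k → Fin n → Bool, (∀ i : Fin k, z i ∈ S) →
      (∑ p : Fin k, ∑ q : Fin k, if p < q then hammingDist (z p) (z q) else 0) ≤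
        (k / 2) * ((k + 1) / 2) * hammingDist l u) ∧
    (∑ p : Fin k, ∑ q : Fin k,
        if p < q then
          hammingDist ((fun i : Fin k => if (i : ℕ) < k / 2 then l else u) p)
            ((fun i : Fin k => if (i : ℕ) < k / 2 then l else u) q)
        else 0) = (k / 2) * ((k + 1) / 2) * hammingDist l u := by
  refine ⟨fun z hz => ?_, ?_⟩
  · simpa using sum_sum_ite_lt_hammingDist_le z fun p => hbound _ (hz p)
  · have hcard : #{p : Fin k | (p : ℕ) < k / 2} = k / 2 := by
      rw [Fin.card_filter_val_lt]
      omega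
    have hcard_not : #{p : Fin k | ¬ (p : ℕ) < k / 2} = (k + 1) / 2 := by
      rw [filter_not, card_sdiff_of_subset (filter_subset _ _), hcard, card_univ, Fintype.card_fin]
      omega
    rw [sum_sum_ite_lt_hammingDist_ite, hcard, hcard_not]

/-- For a nonempty `S ⊆ (Fin n → Bool)` closed under pointwise AND and OR with
least element `l` and greatest element `u`, the maximum of the sum of pairwise
Hamming distances over `k`-tuples from `S` is `⌊k/2⌋·⌈k/2⌉·d(l, u)`, attained
by taking `⌊k/2⌋` copies of `l` and `⌈k/2⌉` copies of `u`. -/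
theorem max_sum_pairwise_hammingDist_double_horn
    (n k : ℕ) (hk : 1 ≤ k) (S : Set (Fin n → Bool)) (hne : S.Nonempty)
    (hand : ∀ a ∈ S, ∀ b ∈ S, a ⊓ b ∈ S)
    (hor : ∀ a ∈ S, ∀ b ∈ S, a ⊔ b ∈ S)
    (l u : Fin n → Bool) (hl : l ∈ S) (hu : u ∈ S)
    (hbound : ∀ x ∈ S, l ≤ x ∧ x ≤ u) :
    (∀ z : Fin k → Fin n → Bool, (∀ i : Fin k, z i ∈ S) →
      (∑ p : Fin k, ∑ q : Fin k, if p < q then hammingDist (z p) (z q) else 0) ≤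
        (k / 2) * ((k + 1) / 2) * hammingDist l u) ∧
    (∑ p : Fin k, ∑ q : Fin k,
        if p < q then
          hammingDist ((fun i : Fin k => if (i : ℕ) < k / 2 then l else u) p)
            ((fun i : Fin k => if (i : ℕ) < k / 2 then l else u) q)
        else 0) = (k / 2) * ((k + 1) / 2) * hammingDist l u :=
  max_sum_pairwise_hammingDist_double_horn_general n k S l u hbound
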